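/- Let w_ev and w_gm be the EVM and GMM priority vectors of a reciprocal PC matrix C with κ = 1 − KI(C) > 0. Then for all i, j, κ² ≤ (w_ev(a_i)/w_ev(a_j))·(w_gm(a_j)/w_gm(a_i)) ≤ 1/κ². -/

import Mathlib

/-!
Koczkodaj's index bounds every triad: `KI C ≤ 1 - κ` gives `κ c_ik c_kj ≤ c_ij`. Summing (for the
eigenvector) or multiplying and taking `n`-th roots (for the geometric mean) over `k` turns this
into `κ c_ij w_j ≤ w_i` for both priority vectors. Together with reciprocity this pins every ratio
`w_i / w_j` into `[κ c_ij, c_ij / κ]`, and multiplying the interval for `w_ev` with the one for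
`w_gm` at the swapped indices gives `[κ², 1 / κ²]`, since `c_ij c_ji = 1`.
-/

open Finset

noncomputable def KI {n : ℕ} (C : Matrix (Fin n) (Fin n) ℝ) : ℝ :=
  ⨆ i : Fin n, ⨆ j : Fin n, ⨆ k : Fin n,
    min |1 - C i j / (C i k * C k j)| |1 - (C i k * C k j) / C i j|

lemma le_of_min_abs_one_sub_le {κ x : ℝ} (hκ : 0 < κ) (hx : 0 < x)
    (h : min |1 - x| |1 - 1 / x| ≤ 1 - κ) : κ ≤ x := by
  rcases min_le_iff.mp h with h | h
  · linarith [(abs_le.mp h).2]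
  · have hinv : 1 / x ≤ 1 / κ := by
      have : 2 - κ ≤ 1 / κ := by
        rw [le_div_iff₀ hκ]; nlinarith [sq_nonneg (1 - κ)]
      linarith [(abs_le.mp h).1]
    exact (one_div_le_one_div hx hκ).mp hinv

lemma min_le_KI {n : ℕ} (C : Matrix (Fin n) (Fin n) ℝ) (i j k : Fin n) :
    min |1 - C i j / (C i k * C k j)| |1 - (C i k * C k j) / C i j| ≤ KI C := by
  unfold KI
  exact le_ciSup_of_le (Set.finite_range _).bddAbove i <|
    le_ciSup_of_le (Set.finite_range _).bddAbove j <|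
      le_ciSup_of_le (Set.finite_range _).bddAbove k le_rfl

lemma mul_le_of_KI_le {n : ℕ} {C : Matrix (Fin n) (Fin n) ℝ} (hpos : ∀ i j, 0 < C i j)
    {κ : ℝ} (hκ : 0 < κ) (hKI : KI C ≤ 1 - κ) (i j k : Fin n) :
    κ * (C i k * C k j) ≤ C i j := by
  have hd : 0 < C i k * C k j := mul_pos (hpos i k) (hpos k j)
  have hmin := (min_le_KI C i j k).trans hKI
  rw [← one_div_div (C i j) (C i k * C k j)] at hmin
  exact (le_div_iff₀ hd).mp (le_of_min_abs_one_sub_le hκ (div_pos (hpos i j) hd) hmin)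

section

variable {ι : Type*} {C : Matrix ι ι ℝ} {κ : ℝ}

lemma div_mem_Icc_of_mul_le (hpos : ∀ i j, 0 < C i j) (hrec : ∀ i j, C i j * C j i = 1)
    (hκ : 0 < κ) {w : ι → ℝ} (hw : ∀ i, 0 < w i) (hbound : ∀ i j, κ * C i j * w j ≤ w i)
    (i j : ι) :
    w i / w j ∈ Set.Icc (κ * C i j) (C i j / κ) := by
  refine ⟨(le_div_iff₀ (hw j)).mpr (hbound i j), ?_⟩
  rw [div_le_div_iff₀ (hw j) hκ]
  calc w i * κ = C i j * (κ * C j i * w i) := by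
        rw [← mul_one (w i * κ), ← hrec i j]; ring
    _ ≤ C i j * w j := mul_le_mul_of_nonneg_left (hbound j i) (hpos i j).le

variable [Fintype ι]

lemma mul_le_of_eigenvector (hpos : ∀ i j, 0 < C i j)
    (htriad : ∀ i j k, κ * (C i k * C k j) ≤ C i j)
    {w : ι → ℝ} (hw : ∀ i, 0 < w i) {lam : ℝ} (hev : ∀ i, ∑ r, C i r * w r = lam * w i)
    (i j : ι) : κ * C i j * w j ≤ w i := by
  have hlam : 0 < lam := by
    have hsum : 0 < ∑ r, C i r * w r :=
      sum_pos (fun r _ => mul_pos (hpos i r) (hw r)) ⟨i, mem_univ i⟩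
    rw [hev i] at hsum
    exact pos_of_mul_pos_left hsum (hw i).le
  have hsum : κ * C i j * ∑ r, C j r * w r ≤ ∑ r, C i r * w r := by
    rw [mul_sum]
    refine sum_le_sum fun r _ => ?_
    calc κ * C i j * (C j r * w r) = κ * (C i j * C j r) * w r := by ring
      _ ≤ C i r * w r := mul_le_mul_of_nonneg_right (htriad i r j) (hw r).le
  rw [hev i, hev j, mul_left_comm] at hsum
  exact le_of_mul_le_mul_left hsum hlam

lemma mul_prod_rpow_inv_card_le [Nonempty ι] {a : ℝ} (ha : 0 ≤ a) {x y : ι → ℝ}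
    (hx : ∀ r, 0 ≤ x r) (hxy : ∀ r, a * x r ≤ y r) :
    a * (∏ r, x r) ^ ((1 : ℝ) / Fintype.card ι) ≤ (∏ r, y r) ^ ((1 : ℝ) / Fintype.card ι) := by
  have hN : (Fintype.card ι : ℝ) ≠ 0 := by exact_mod_cast Fintype.card_ne_zero
  have hroot : a = (a ^ Fintype.card ι) ^ ((1 : ℝ) / Fintype.card ι) := by
    rw [← Real.rpow_natCast, ← Real.rpow_mul ha, mul_one_div_cancel hN, Real.rpow_one]
  have hprod : a ^ Fintype.card ι * ∏ r, x r ≤ ∏ r, y r := by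
    rw [← card_univ, ← prod_const, ← prod_mul_distrib]
    exact prod_le_prod (fun r _ => mul_nonneg ha (hx r)) fun r _ => hxy r
  rw [hroot, ← Real.mul_rpow (pow_nonneg ha _) (prod_nonneg fun r _ => hx r)]
  exact Real.rpow_le_rpow (mul_nonneg (pow_nonneg ha _) (prod_nonneg fun r _ => hx r)) hprod
    (by positivity)

lemma mul_le_of_geomMean (hpos : ∀ i j, 0 < C i j) (hκ : 0 ≤ κ)
    (htriad : ∀ i j k, κ * (C i k * C k j) ≤ C i j) {w : ι → ℝ} {c : ℝ} (hc : 0 < c)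
    (hgm : ∀ i, w i = c * (∏ r, C i r) ^ ((1 : ℝ) / Fintype.card ι)) (i j : ι) :
    κ * C i j * w j ≤ w i := by
  have : Nonempty ι := ⟨i⟩
  rw [hgm i, hgm j, mul_left_comm]
  refine mul_le_mul_of_nonneg_left (mul_prod_rpow_inv_card_le
    (mul_nonneg hκ (hpos i j).le) (fun r => (hpos j r).le) fun r => ?_) hc.le
  rw [mul_assoc]
  exact htriad i r j

end

theorem evm_gmm_beta_bound_general {n : ℕ} (C : Matrix (Fin n) (Fin n) ℝ)
    (hpos : ∀ i j, 0 < C i j)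
    (hrec : ∀ i j, C i j * C j i = 1)
    (κ : ℝ) (hκ : κ = 1 - KI C) (hκpos : 0 < κ)
    (wev : Fin n → ℝ) (hwev : ∀ i, 0 < wev i) (lam : ℝ)
    (hev : ∀ i, (∑ r, C i r * wev r) = lam * wev i)
    (wgm : Fin n → ℝ) (hwgm : ∀ i, 0 < wgm i)
    (hgm : ∃ c : ℝ, 0 < c ∧ ∀ i, wgm i = c * (∏ r, C i r) ^ ((1 : ℝ) / n)) :
    ∀ i j : Fin n,
      κ ^ 2 ≤ (wev i / wev j) * (wgm j / wgm i) ∧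
        (wev i / wev j) * (wgm j / wgm i) ≤ 1 / κ ^ 2 := by
  obtain ⟨c, hc, hgm⟩ := hgm
  have htriad := mul_le_of_KI_le hpos hκpos (by linarith)
  have hev_bound := div_mem_Icc_of_mul_le hpos hrec hκpos hwev
    (mul_le_of_eigenvector hpos htriad hwev hev)
  have hgm_bound := div_mem_Icc_of_mul_le hpos hrec hκpos hwgm
    (mul_le_of_geomMean hpos hκpos.le htriad hc (by simpa only [Fintype.card_fin] using hgm))
  intro i j
  obtain ⟨hev_lo, hev_hi⟩ := hev_bound i j
  obtain ⟨hgm_lo, hgm_hi⟩ := hgm_bound j i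
  constructor
  · calc κ ^ 2 = κ * C i j * (κ * C j i) := by rw [← mul_one (κ ^ 2), ← hrec i j]; ring
      _ ≤ wev i / wev j * (wgm j / wgm i) :=
        mul_le_mul hev_lo hgm_lo (mul_pos hκpos (hpos j i)).le (div_pos (hwev i) (hwev j)).le
  · calc wev i / wev j * (wgm j / wgm i) ≤ C i j / κ * (C j i / κ) :=
        mul_le_mul hev_hi hgm_hi (div_pos (hwgm j) (hwgm i)).le
          (div_pos (hpos i j) hκpos).le
      _ = 1 / κ ^ 2 := by rw [div_mul_div_comm, hrec i j, sq]

theorem evm_gmm_beta_bound {n : ℕ} (hn : 2 < n) (C : Matrix (Fin n) (Fin n) ℝ)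
    (hpos : ∀ i j, 0 < C i j) (hdiag : ∀ i, C i i = 1)
    (hrec : ∀ i j, C i j * C j i = 1)
    (κ : ℝ) (hκ : κ = 1 - KI C) (hκpos : 0 < κ)
    (wev : Fin n → ℝ) (hwev : ∀ i, 0 < wev i) (lam : ℝ)
    (hev : ∀ i, (∑ r, C i r * wev r) = lam * wev i)
    (wgm : Fin n → ℝ) (hwgm : ∀ i, 0 < wgm i)
    (hgm : ∃ c : ℝ, 0 < c ∧ ∀ i, wgm i = c * (∏ r, C i r) ^ ((1 : ℝ) / n)) :
    ∀ i j : Fin n,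
      κ ^ 2 ≤ (wev i / wev j) * (wgm j / wgm i) ∧
        (wev i / wev j) * (wgm j / wgm i) ≤ 1 / κ ^ 2 :=
  evm_gmm_beta_bound_general C hpos hrec κ hκ hκpos wev hwev lam hev wgm hwgm hgm
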